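/- Let G be a connected P_5-free graph with exactly one cut vertex v. Then there is at most one block B of G such that v is not adjacent to every vertex of B other than itself. -/

import Mathlib

/-!
Every block containing a non-neighbour `w ≠ v` of `v` is `v` together with the component of `w`
in `G - v`, because `v` is the only cut vertex. Walking from `v` to `w` inside such a block
yields an edge `x y` with `x` adjacent and `y` non-adjacent to `v`. Distinct components of
`G - v` are not joined by edges, so two such blocks give an induced path `y₁ x₁ v x₂ y₂`.
-/

open Classical

variable {V : Type}

/-- Reachability within a vertex subset `s` of the graph `G`. -/
def ReachIn (G : SimpleGraph V) (s : Finset V) (u v : V) : Prop :=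
  Relation.ReflTransGen (fun a b => a ∈ s ∧ b ∈ s ∧ G.Adj a b) u v

/-- The induced subgraph of `G` on `s` is (nonempty and) connected. -/
def ConnIn (G : SimpleGraph V) (s : Finset V) : Prop :=
  s.Nonempty ∧ ∀ u ∈ s, ∀ v ∈ s, ReachIn G s u v

/-- The vertex set of the connected component of `v` in the induced subgraph on `s`. -/
noncomputable def compIn (G : SimpleGraph V) (s : Finset V) (v : V) : Finset V :=
  s.filter (fun u => ReachIn G s v u)

/-- Fuel-based recursion computing the treedepth of the induced subgraph of `G` on `s`
(correct whenever the fuel is at least `s.card`): treedepth of the null graph is `0`;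
for a connected graph it is `1 + min_v td(G - v)`; otherwise the max over components. -/
noncomputable def tdAux (G : SimpleGraph V) : ℕ → Finset V → ℕ
  | 0, _ => 0
  | n+1, s =>
    if hs : s = ∅ then 0
    else if ConnIn G s then
      1 + s.inf' (Finset.nonempty_of_ne_empty hs) (fun v => tdAux G n (s.erase v))
    else
      s.sup (fun v => tdAux G n (compIn G s v))

/-- The treedepth of the induced subgraph of `G` on the vertex set `s`. -/
noncomputable def tdOn (G : SimpleGraph V) (s : Finset V) : ℕ := tdAux G s.card s

/-- The treedepth of a finite graph. -/
noncomputable def td (G : SimpleGraph V) [Fintype V] : ℕ := tdOn G Finset.univ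

/-- `B` induces a block-like graph: connected and with no cut vertex
(removing any vertex leaves it connected, when nonempty). -/
def IsBlockSet (G : SimpleGraph V) (B : Finset V) : Prop :=
  ConnIn G B ∧ ∀ v ∈ B, (B.erase v).Nonempty → ConnIn G (B.erase v)

/-- `B` is a block of the induced subgraph of `G` on `s`: a maximal connected
subgraph without a cut vertex. -/
def IsBlock (G : SimpleGraph V) (s B : Finset V) : Prop :=
  B ⊆ s ∧ IsBlockSet G B ∧ ∀ B' : Finset V, B ⊆ B' → B' ⊆ s → IsBlockSet G B' → B' = B

/-- Fuel-based recursion computing the 2-treedepth of the induced subgraph of `G` on `s`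
(correct whenever the fuel is at least `s.card`): `0` for the null graph;
`1 + min_v td₂(G - v)` if the graph is a block; the max over blocks otherwise. -/
noncomputable def td2Aux (G : SimpleGraph V) : ℕ → Finset V → ℕ
  | 0, _ => 0
  | n+1, s =>
    if hs : s = ∅ then 0
    else if IsBlockSet G s then
      1 + s.inf' (Finset.nonempty_of_ne_empty hs) (fun v => td2Aux G n (s.erase v))
    else
      (s.powerset.filter (fun B => IsBlock G s B)).sup (fun B => td2Aux G n B)

/-- The 2-treedepth of the induced subgraph of `G` on `s`. -/
noncomputable def td2On (G : SimpleGraph V) (s : Finset V) : ℕ := td2Aux G s.card s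

/-- The 2-treedepth of a finite graph. -/
noncomputable def td2 (G : SimpleGraph V) [Fintype V] : ℕ := td2On G Finset.univ

/-- `G` contains a path on `m` vertices as a subgraph. -/
def HasPathOn (G : SimpleGraph V) (m : ℕ) : Prop :=
  ∃ p : Fin m → V, Function.Injective p ∧
    ∀ i : Fin m, ∀ h : i.1 + 1 < m, G.Adj (p i) (p ⟨i.1 + 1, h⟩)

/-- `G` contains an induced path on `m` vertices: `m` distinct vertices with
adjacency exactly between consecutive ones. -/
def HasInducedPathOn (G : SimpleGraph V) (m : ℕ) : Prop :=
  ∃ p : Fin m → V, Function.Injective p ∧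
    ∀ i j : Fin m, G.Adj (p i) (p j) ↔ (i.1 + 1 = j.1 ∨ j.1 + 1 = i.1)

/-- `G` is `P_t`-free: it has no induced path on `t` vertices. -/
def PtFree (G : SimpleGraph V) (t : ℕ) : Prop := ¬ HasInducedPathOn G t

/-- `v` is a cut vertex of the finite graph `G`: removing it disconnects two
vertices that were connected in `G`. -/
def IsCutVertex (G : SimpleGraph V) [Fintype V] (v : V) : Prop :=
  ∃ u w : V, u ≠ v ∧ w ≠ v ∧ ReachIn G Finset.univ u w ∧
    ¬ ReachIn G (Finset.univ.erase v) u w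

/-- Vertices of the block-cut tree of `G`: blocks of `G` together with cut vertices of `G`. -/
def BCVert (G : SimpleGraph V) [Fintype V] : Type :=
  {B : Finset V // IsBlock G Finset.univ B} ⊕ {v : V // IsCutVertex G v}

/-- The block-cut tree (forest of blocks) of `G`: a block `B` is adjacent to a
cut vertex `v` exactly when `v ∈ B`. -/
def bcTree (G : SimpleGraph V) [Fintype V] : SimpleGraph (BCVert G) where
  Adj x y := match x, y with
    | Sum.inl B, Sum.inr v => v.1 ∈ B.1
    | Sum.inr v, Sum.inl B => v.1 ∈ B.1
    | _, _ => False
  symm := ⟨by rintro (B|v) (B'|v') h <;> simp_all⟩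
  loopless := ⟨by rintro (B|v) h <;> simp_all⟩

section ReachIn

variable {G : SimpleGraph V} {s t : Finset V} {a b v x : V}

theorem ReachIn.mono (hst : s ⊆ t) (h : ReachIn G s a b) : ReachIn G t a b :=
  Relation.ReflTransGen.mono (fun _ _ hab => ⟨hst hab.1, hst hab.2.1, hab.2.2⟩) _ _ h

theorem ReachIn.symm (h : ReachIn G s a b) : ReachIn G s b a :=
  Relation.ReflTransGen.mono (fun _ _ hab => ⟨hab.2.1, hab.1, hab.2.2.symm⟩) _ _
    (Relation.ReflTransGen.swap _ _ h)

theorem ReachIn.trans (hab : ReachIn G s a b) (hbc : ReachIn G s b x) : ReachIn G s a x :=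
  Relation.ReflTransGen.trans hab hbc

theorem SimpleGraph.Connected.reachIn_univ [Fintype V] (hconn : G.Connected) (a b : V) :
    ReachIn G Finset.univ a b :=
  Relation.ReflTransGen.mono (fun _ _ hab => ⟨Finset.mem_univ _, Finset.mem_univ _, hab⟩) _ _
    ((SimpleGraph.reachable_iff_reflTransGen a b).1 (hconn a b))

theorem connIn_of_forall_reachIn (hv : v ∈ s) (h : ∀ a ∈ s, ReachIn G s a v) : ConnIn G s :=
  ⟨⟨v, hv⟩, fun a ha b hb => (h a ha).trans (h b hb).symm⟩

theorem ReachIn.inter_of_adj_mem {T : Finset V} (hT : ∀ x ∈ T, x ≠ v → ∀ y, G.Adj x y → y ∈ T)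
    (h : ReachIn G s a v) (ha : a ∈ T) : ReachIn G (T ∩ s) a v := by
  induction h using Relation.ReflTransGen.head_induction_on with
  | refl => exact .refl
  | @head a a' step _ ih =>
    obtain ⟨has, ha's, hadj⟩ := step
    rcases eq_or_ne a v with rfl | hav
    · exact .refl
    · have ha'T := hT a ha hav a' hadj
      exact .head ⟨Finset.mem_inter.2 ⟨ha, has⟩, Finset.mem_inter.2 ⟨ha'T, ha's⟩, hadj⟩ (ih ha'T)

theorem ReachIn.exists_adj_of_not_adj (h : ReachIn G s a b) (ha : a = v ∨ G.Adj v a)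
    (hb : ¬ G.Adj v b) (hbv : b ≠ v) :
    ∃ x y, x ∈ s ∧ y ∈ s ∧ y ≠ v ∧ G.Adj v x ∧ ¬ G.Adj v y ∧ G.Adj x y := by
  induction h using Relation.ReflTransGen.head_induction_on with
  | refl => exact absurd ha (not_or.2 ⟨hbv, hb⟩)
  | @head a a' step _ ih =>
    obtain ⟨has, ha's, hadj⟩ := step
    by_cases ha' : a' = v ∨ G.Adj v a'
    · exact ih ha'
    · obtain ⟨ha'v, hva'⟩ := not_or.1 ha'
      rcases ha with rfl | hva
      · exact absurd hadj hva'
      · exact ⟨a, a', has, ha's, ha'v, hva, hva', hadj⟩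

end ReachIn

section CompIn

variable {G : SimpleGraph V} {s : Finset V} {u u' v x y : V}

theorem mem_compIn : x ∈ compIn G s u ↔ x ∈ s ∧ ReachIn G s u x := Finset.mem_filter

theorem mem_compIn_self (hu : u ∈ s) : u ∈ compIn G s u := mem_compIn.2 ⟨hu, .refl⟩

theorem ne_of_mem_compIn_erase (hx : x ∈ compIn G (s.erase v) u) : x ≠ v :=
  (Finset.mem_erase.1 (mem_compIn.1 hx).1).1

theorem reachIn_compIn (h : ReachIn G s u x) : ReachIn G (compIn G s u) u x := by
  induction h with
  | refl => exact .refl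
  | tail hb step ih =>
    exact ih.tail ⟨mem_compIn.2 ⟨step.1, hb⟩, mem_compIn.2 ⟨step.2.1, hb.tail step⟩, step.2.2⟩

theorem connIn_compIn (hu : u ∈ s) : ConnIn G (compIn G s u) :=
  connIn_of_forall_reachIn (mem_compIn_self hu) fun _ ha => (reachIn_compIn (mem_compIn.1 ha).2).symm

theorem compIn_eq_of_mem (hx : x ∈ compIn G s u) : compIn G s x = compIn G s u := by
  have hux := (mem_compIn.1 hx).2
  ext y
  simp only [mem_compIn]
  exact and_congr_right fun _ => ⟨hux.trans, hux.symm.trans⟩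

theorem mem_compIn_of_adj (hx : x ∈ compIn G s u) (hy : y ∈ s) (hadj : G.Adj x y) :
    y ∈ compIn G s u :=
  mem_compIn.2 ⟨hy, (mem_compIn.1 hx).2.tail ⟨(mem_compIn.1 hx).1, hy, hadj⟩⟩

theorem ne_of_mem_compIn_of_ne (hne : compIn G s u ≠ compIn G s u') (hx : x ∈ compIn G s u)
    (hy : y ∈ compIn G s u') : x ≠ y := by
  rintro rfl
  exact hne ((compIn_eq_of_mem hx).symm.trans (compIn_eq_of_mem hy))

theorem not_adj_of_mem_compIn_of_ne (hne : compIn G s u ≠ compIn G s u')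
    (hx : x ∈ compIn G s u) (hy : y ∈ compIn G s u') : ¬ G.Adj x y := fun hadj =>
  ne_of_mem_compIn_of_ne hne (mem_compIn_of_adj hx (mem_compIn.1 hy).1 hadj) hy rfl

end CompIn

section Blocks

variable [Fintype V] {G : SimpleGraph V} {B : Finset V} {u v w x y : V}

theorem adj_mem_insert_compIn (hx : x ∈ insert v (compIn G (Finset.univ.erase v) u))
    (hxv : x ≠ v) (hadj : G.Adj x y) : y ∈ insert v (compIn G (Finset.univ.erase v) u) := by
  rcases eq_or_ne y v with rfl | hyv
  · exact Finset.mem_insert_self _ _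
  · exact Finset.mem_insert_of_mem <| mem_compIn_of_adj ((Finset.mem_insert.1 hx).resolve_left hxv)
      (Finset.mem_erase.2 ⟨hyv, Finset.mem_univ _⟩) hadj

theorem connIn_insert_compIn (hconn : G.Connected) (v u : V) :
    ConnIn G (insert v (compIn G (Finset.univ.erase v) u)) :=
  connIn_of_forall_reachIn (Finset.mem_insert_self _ _) fun a ha => by
    simpa using (hconn.reachIn_univ a v).inter_of_adj_mem
      (fun _ hx hxv _ => adj_mem_insert_compIn hx hxv) ha

/-- Removing `v` leaves the component; removing any other vertex `y` leaves `G - y` connected,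
and a walk in `G - y` from the component to `v` stays in the component until it meets `v`. -/
theorem isBlockSet_insert_compIn (hconn : G.Connected) (huniq : ∀ u, IsCutVertex G u → u = v)
    (u : V) : IsBlockSet G (insert v (compIn G (Finset.univ.erase v) u)) := by
  refine ⟨connIn_insert_compIn hconn v u, fun y hy hne => ?_⟩
  rcases eq_or_ne y v with rfl | hyv
  · rw [Finset.erase_insert fun h => ne_of_mem_compIn_erase h rfl] at hne ⊢
    obtain ⟨c, hc⟩ := hne
    rw [← compIn_eq_of_mem hc]
    exact connIn_compIn (mem_compIn.1 hc).1
  · have hreach : ∀ a, a ≠ y → ReachIn G (Finset.univ.erase y) a v := fun a hay => by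
      by_contra h
      exact hyv (huniq y ⟨a, v, hay, hyv.symm, hconn.reachIn_univ a v, h⟩)
    have herase : (insert v (compIn G (Finset.univ.erase v) u)).erase y =
        insert v (compIn G (Finset.univ.erase v) u) ∩ Finset.univ.erase y := by
      ext; simp [and_comm]
    refine connIn_of_forall_reachIn (Finset.mem_erase.2 ⟨hyv.symm, Finset.mem_insert_self _ _⟩)
      fun a ha => ?_
    rw [herase] at ha ⊢
    exact (hreach a (Finset.mem_erase.1 (Finset.mem_inter.1 ha).2).1).inter_of_adj_mem
      (fun _ hx hxv _ => adj_mem_insert_compIn hx hxv) (Finset.mem_inter.1 ha).1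

theorem IsBlockSet.subset_insert_compIn (hB : IsBlockSet G B) (hw : w ∈ B) (hwv : w ≠ v) :
    B ⊆ insert v (compIn G (Finset.univ.erase v) w) := by
  have hconn : ConnIn G (B.erase v) := by
    by_cases hv : v ∈ B
    · exact hB.2 v hv ⟨w, Finset.mem_erase.2 ⟨hwv, hw⟩⟩
    · rw [Finset.erase_eq_of_notMem hv]; exact hB.1
  intro x hx
  rcases eq_or_ne x v with rfl | hxv
  · exact Finset.mem_insert_self _ _
  · refine Finset.mem_insert_of_mem (mem_compIn.2 ⟨Finset.mem_erase.2 ⟨hxv, Finset.mem_univ _⟩, ?_⟩)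
    exact (hconn.2 w (Finset.mem_erase.2 ⟨hwv, hw⟩) x (Finset.mem_erase.2 ⟨hxv, hx⟩)).mono
      (Finset.erase_subset_erase v (Finset.subset_univ B))

theorem IsBlock.eq_insert_compIn (hconn : G.Connected) (huniq : ∀ u, IsCutVertex G u → u = v)
    (hB : IsBlock G Finset.univ B) (hw : w ∈ B) (hwv : w ≠ v) :
    B = insert v (compIn G (Finset.univ.erase v) w) :=
  (hB.2.2 _ (hB.2.1.subset_insert_compIn hw hwv) (Finset.subset_univ _)
    (isBlockSet_insert_compIn hconn huniq w)).symm

theorem exists_adj_of_not_adj_in_compIn (hconn : G.Connected) (hwv : w ≠ v) (hvw : ¬ G.Adj v w) :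
    ∃ x ∈ compIn G (Finset.univ.erase v) w, ∃ y ∈ compIn G (Finset.univ.erase v) w,
      G.Adj v x ∧ ¬ G.Adj v y ∧ G.Adj x y := by
  have hvw' := (connIn_insert_compIn hconn v w).2 v (Finset.mem_insert_self _ _) w
    (Finset.mem_insert_of_mem (mem_compIn_self (Finset.mem_erase.2 ⟨hwv, Finset.mem_univ _⟩)))
  obtain ⟨x, y, hx, hy, hyv, hvx, hvy, hxy⟩ := hvw'.exists_adj_of_not_adj (Or.inl rfl) hvw hwv
  exact ⟨x, (Finset.mem_insert.1 hx).resolve_left hvx.ne', y,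
    (Finset.mem_insert.1 hy).resolve_left hyv, hvx, hvy, hxy⟩

end Blocks

theorem hasInducedPathOn_five {G : SimpleGraph V} {a b c d e : V}
    (hab : G.Adj a b) (hbc : G.Adj b c) (hcd : G.Adj c d) (hde : G.Adj d e)
    (hac : ¬ G.Adj a c) (had : ¬ G.Adj a d) (hae : ¬ G.Adj a e)
    (hbd : ¬ G.Adj b d) (hbe : ¬ G.Adj b e) (hce : ¬ G.Adj c e)
    (dac : a ≠ c) (dbd : b ≠ d) (dce : c ≠ e) : HasInducedPathOn G 5 := by
  have dad : a ≠ d := by rintro rfl; exact hac hcd.symm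
  have dbe : b ≠ e := by rintro rfl; exact hbd hde.symm
  have dae : a ≠ e := by rintro rfl; exact hbe hab.symm
  refine ⟨![a, b, c, d, e], ?_, fun i j => ?_⟩
  · intro i j hij
    fin_cases i <;> fin_cases j <;> simp_all [hab.ne, hbc.ne, hcd.ne, hde.ne, Ne.symm]
  · fin_cases i <;> fin_cases j <;> simp_all [G.adj_comm]

theorem p5free_cut_almost_apex_general {V : Type} [Fintype V] (G : SimpleGraph V)
    (hconn : G.Connected) (hfree : PtFree G 5) (v : V)
    (huniq : ∀ u : V, IsCutVertex G u → u = v) :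
    ∀ B1 B2 : Finset V, IsBlock G Finset.univ B1 → IsBlock G Finset.univ B2 →
      (¬ ∀ u ∈ B1, u ≠ v → G.Adj v u) → (¬ ∀ u ∈ B2, u ≠ v → G.Adj v u) →
      B1 = B2 := by
  intro B1 B2 hB1 hB2 hna1 hna2
  push Not at hna1 hna2
  obtain ⟨w1, hw1, hw1v, hvw1⟩ := hna1
  obtain ⟨w2, hw2, hw2v, hvw2⟩ := hna2
  rw [hB1.eq_insert_compIn hconn huniq hw1 hw1v, hB2.eq_insert_compIn hconn huniq hw2 hw2v]
  by_contra hne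
  have hC : compIn G (Finset.univ.erase v) w1 ≠ compIn G (Finset.univ.erase v) w2 :=
    fun h => hne (congrArg (insert v) h)
  obtain ⟨x1, hx1, y1, hy1, hvx1, hvy1, hxy1⟩ := exists_adj_of_not_adj_in_compIn hconn hw1v hvw1
  obtain ⟨x2, hx2, y2, hy2, hvx2, hvy2, hxy2⟩ := exists_adj_of_not_adj_in_compIn hconn hw2v hvw2
  have hsep {a b : V} (ha : a ∈ compIn G (Finset.univ.erase v) w1)
      (hb : b ∈ compIn G (Finset.univ.erase v) w2) : ¬ G.Adj a b :=
    not_adj_of_mem_compIn_of_ne hC ha hb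
  exact hfree (hasInducedPathOn_five hxy1.symm hvx1.symm hvx2 hxy2 (fun h => hvy1 h.symm)
    (hsep hy1 hx2) (hsep hy1 hy2) (hsep hx1 hx2) (hsep hx1 hy2) hvy2
    (ne_of_mem_compIn_erase hy1) (ne_of_mem_compIn_of_ne hC hx1 hx2)
    (ne_of_mem_compIn_erase hy2).symm)

theorem p5free_cut_almost_apex {V : Type} [Fintype V] (G : SimpleGraph V)
    (hconn : G.Connected) (hfree : PtFree G 5) (v : V) (hcut : IsCutVertex G v)
    (huniq : ∀ u : V, IsCutVertex G u → u = v) :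
    ∀ B1 B2 : Finset V, IsBlock G Finset.univ B1 → IsBlock G Finset.univ B2 →
      (¬ ∀ u ∈ B1, u ≠ v → G.Adj v u) → (¬ ∀ u ∈ B2, u ≠ v → G.Adj v u) →
      B1 = B2 :=
  p5free_cut_almost_apex_general G hconn hfree v huniq
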